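/- Let x_{i−1} < x_i < x_{i+1}, h_{i−1} = x_i − x_{i−1}, h_i = x_{i+1} − x_i, and let m_{i−1}, m_i be the divided differences of given data. Define the Fritsch–Butland value ḟ_i^{FB} by: ḟ_i^{FB} = 3·m_{i−1}·m_i/(m_{i−1} + 2·m_i) if m_{i−1}·m_i > 0 and |m_i| ≤ |m_{i−1}|; ḟ_i^{FB} = 3·m_{i−1}·m_i/(m_i + 2·m_{i−1}) if m_{i−1}·m_i > 0 and |m_i| > |m_{i−1}|; and ḟ_i^{FB} = 0 if m_{i−1}·m_i ≤ 0. Then: (a) ḟ_i^{FB}·m_{i−1} ≥ 0, ḟ_i^{FB}·m_i ≥ 0, and |ḟ_i^{FB}| ≤ 3·min(|m_{i−1}|, |m_i|); (b) if f is twice continuously differentiable on [x_{i−1}, x_{i+1}] with |f''(x)| ≤ M there, m_{i−1} = (f(x_i) − f(x_{i−1}))/h_{i−1}, m_i = (f(x_{i+1}) − f(x_i))/h_i, and m_{i−1}·m_i > 0, then |ḟ_i^{FB} − f'(x_i)| ≤ (3/2)·M·max(h_{i−1}, h_i), i.e. ḟ_i^{FB} is a first-order accurate approximation of f'(x_i).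 -/

import Mathlib

/-!
For slopes of equal sign, say `0 < b ≤ a`, the Fritsch–Butland value `3ab / (a + 2b)` is the
harmonic mean of `a` and `b` with weights `2/3` and `1/3`. Hence it lies between the two slopes
and is at most `3b`.

By the mean value theorem each divided difference is `f'` at some point of its cell, so, `f'`
being `M`-Lipschitz, it is within `M·h` of `f'(xᵢ)`. The value lies between the two divided
differences, so it is within `M·max(hᵢ₋₁, hᵢ)` of `f'(xᵢ)` as well.
-/

/-- The Fritsch–Butland derivative value built from the two adjacent divided
differences `mm = mᵢ₋₁`, `mi = mᵢ`. -/
noncomputable def fritschButland (mm mi : ℝ) : ℝ :=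
  if mm * mi ≤ 0 then 0
  else if |mi| ≤ |mm| then 3 * mm * mi / (mm + 2 * mi)
  else 3 * mm * mi / (mi + 2 * mm)

open Set

theorem fritschButland_neg_neg (a b : ℝ) : fritschButland (-a) (-b) = -fritschButland a b := by
  unfold fritschButland
  simp only [neg_mul_neg, abs_neg]
  split_ifs
  · simp
  · rw [show -a + 2 * -b = -(a + 2 * b) by ring, div_neg]
    ring
  · rw [show -b + 2 * -a = -(b + 2 * a) by ring, div_neg]
    ring

theorem fritschButland_mem_uIcc_of_pos {a b : ℝ} (ha : 0 < a) (hb : 0 < b) :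
    fritschButland a b ∈ uIcc a b ∧ fritschButland a b ≤ 3 * min a b := by
  rw [fritschButland, if_neg (not_le.2 (by positivity)), abs_of_pos ha, abs_of_pos hb,
    mem_uIcc]
  rcases le_or_gt b a with hba | hab
  · have hd : 0 < a + 2 * b := by positivity
    rw [if_pos hba, min_eq_right hba]
    refine ⟨Or.inr ⟨?_, ?_⟩, ?_⟩
    · rw [le_div_iff₀ hd]; nlinarith
    · rw [div_le_iff₀ hd]; nlinarith
    · rw [div_le_iff₀ hd]; nlinarith
  · have hd : 0 < b + 2 * a := by positivity
    rw [if_neg (not_le.2 hab), min_eq_left hab.le]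
    refine ⟨Or.inl ⟨?_, ?_⟩, ?_⟩
    · rw [le_div_iff₀ hd]; nlinarith
    · rw [div_le_iff₀ hd]; nlinarith
    · rw [div_le_iff₀ hd]; nlinarith

theorem fritschButland_mem_uIcc {a b : ℝ} (h : 0 < a * b) : fritschButland a b ∈ uIcc a b := by
  rcases pos_and_pos_or_neg_and_neg_of_mul_pos h with ⟨ha, hb⟩ | ⟨ha, hb⟩
  · exact (fritschButland_mem_uIcc_of_pos ha hb).1
  · have := mem_image_of_mem Neg.neg
      (fritschButland_mem_uIcc_of_pos (neg_pos.2 ha) (neg_pos.2 hb)).1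
    rwa [image_neg_uIcc, neg_neg, neg_neg, fritschButland_neg_neg, neg_neg] at this

theorem fritschButland_mul_nonneg_and_abs_le (a b : ℝ) :
    0 ≤ fritschButland a b * a ∧ 0 ≤ fritschButland a b * b ∧
      |fritschButland a b| ≤ 3 * min |a| |b| := by
  have of_pos : ∀ {a b : ℝ}, 0 < a → 0 < b →
      0 ≤ fritschButland a b * a ∧ 0 ≤ fritschButland a b * b ∧
        |fritschButland a b| ≤ 3 * min |a| |b| := by
    intro a b ha hb
    obtain ⟨hmem, hle⟩ := fritschButland_mem_uIcc_of_pos ha hb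
    have hpos : 0 < fritschButland a b := ordConnected_Ioi.uIcc_subset ha hb hmem
    rw [abs_of_pos hpos, abs_of_pos ha, abs_of_pos hb]
    exact ⟨by positivity, by positivity, hle⟩
  rcases le_or_gt (a * b) 0 with h | h
  · simp only [fritschButland, if_pos h, zero_mul, le_refl, abs_zero, true_and]
    positivity
  rcases pos_and_pos_or_neg_and_neg_of_mul_pos h with ⟨ha, hb⟩ | ⟨ha, hb⟩
  · exact of_pos ha hb
  · simpa [fritschButland_neg_neg] using of_pos (neg_pos.2 ha) (neg_pos.2 hb)

theorem abs_sub_le_of_mem_uIcc {α : Type*} [AddCommGroup α] [LinearOrder α]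
    [IsOrderedAddMonoid α] {a b z d e : α} (hz : z ∈ uIcc a b) (ha : |a - d| ≤ e)
    (hb : |b - d| ≤ e) : |z - d| ≤ e := by
  rw [abs_sub_comm, mem_Icc_iff_abs_le] at ha hb ⊢
  exact uIcc_subset_Icc ha hb hz

theorem abs_derivWithin_sub_le_of_abs_iteratedDerivWithin_two_le {f : ℝ → ℝ} {s : Set ℝ}
    {M : ℝ} (hs : Convex ℝ s) (hs' : UniqueDiffOn ℝ s) (hf : ContDiffOn ℝ 2 f s)
    (hM : ∀ t ∈ s, |iteratedDerivWithin 2 f s t| ≤ M) {x y : ℝ} (hx : x ∈ s)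
    (hy : y ∈ s) :
    |derivWithin f s y - derivWithin f s x| ≤ M * |y - x| := by
  have hdiff : DifferentiableOn ℝ (derivWithin f s) s :=
    (hf.derivWithin hs' (m := 1) (by norm_num)).differentiableOn (by norm_num)
  have hbound : ∀ t ∈ s, ‖derivWithin (derivWithin f s) s t‖ ≤ M := fun t ht => by
    simpa [iteratedDerivWithin_succ, iteratedDerivWithin_one] using hM t ht
  exact hs.norm_image_sub_le_of_norm_derivWithin_le hdiff hbound hx hy

theorem abs_slope_sub_le_of_lipschitz {f f' : ℝ → ℝ} {u v x M : ℝ} (huv : u < v)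
    (hf : ContinuousOn f (Icc u v)) (hf' : ∀ y ∈ Ioo u v, HasDerivAt f (f' y) y)
    (hx : x ∈ Icc u v) (hM : 0 ≤ M) (hL : ∀ y ∈ Ioo u v, |f' y - f' x| ≤ M * |y - x|) :
    |(f v - f u) / (v - u) - f' x| ≤ M * (v - u) := by
  obtain ⟨c, hc, hslope⟩ := exists_hasDerivAt_eq_slope f f' huv hf hf'
  have hcx : |c - x| ≤ v - u :=
    abs_sub_le_iff.2 ⟨by linarith [hc.2, hx.1], by linarith [hc.1, hx.2]⟩
  calc |(f v - f u) / (v - u) - f' x| = |f' c - f' x| := by rw [hslope]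
    _ ≤ M * |c - x| := hL c hc
    _ ≤ M * (v - u) := by gcongr

theorem abs_slope_sub_derivWithin_le {f : ℝ → ℝ} {a b u v x M : ℝ} (hab : a < b)
    (hf : ContDiffOn ℝ 2 f (Icc a b))
    (hM : ∀ t ∈ Icc a b, |iteratedDerivWithin 2 f (Icc a b) t| ≤ M)
    (hu : a ≤ u) (huv : u < v) (hv : v ≤ b) (hx : x ∈ Icc u v) :
    |(f v - f u) / (v - u) - derivWithin f (Icc a b) x| ≤ M * (v - u) := by
  have hsub : Icc u v ⊆ Icc a b := Icc_subset_Icc hu hv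
  refine abs_slope_sub_le_of_lipschitz huv (hf.continuousOn.mono hsub) (fun y hy => ?_) hx
    ((abs_nonneg _).trans (hM x (hsub hx))) (fun y hy =>
      abs_derivWithin_sub_le_of_abs_iteratedDerivWithin_two_le (convex_Icc a b)
        (uniqueDiffOn_Icc hab) hf hM (hsub hx) (hsub (Ioo_subset_Icc_self hy)))
  have hy' : y ∈ Ioo a b := ⟨hu.trans_lt hy.1, hy.2.trans_le hv⟩
  exact ((hf.differentiableOn (by norm_num) y (Ioo_subset_Icc_self hy')).hasDerivWithinAt
    ).hasDerivAt (Icc_mem_nhds hy'.1 hy'.2)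

/-- (a) The Fritsch–Butland value has the same sign as both adjacent divided
differences and satisfies `|ḟᵢ^{FB}| ≤ 3·min(|mᵢ₋₁|, |mᵢ|)`;
(b) for `f ∈ C²` with `|f''| ≤ M` and `mᵢ₋₁·mᵢ > 0` it is a first-order
accurate approximation of `f'(xᵢ)`:
`|ḟᵢ^{FB} − f'(xᵢ)| ≤ (3/2)·M·max(hᵢ₋₁, hᵢ)`. -/
theorem fritschButland_properties :
    (∀ mm mi : ℝ,
      0 ≤ fritschButland mm mi * mm ∧ 0 ≤ fritschButland mm mi * mi ∧
      |fritschButland mm mi| ≤ 3 * min |mm| |mi|) ∧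
    (∀ (xm xi xp M : ℝ) (f : ℝ → ℝ), xm < xi → xi < xp →
      ContDiffOn ℝ 2 f (Set.Icc xm xp) →
      (∀ t ∈ Set.Icc xm xp, |iteratedDerivWithin 2 f (Set.Icc xm xp) t| ≤ M) →
      ((f xi - f xm) / (xi - xm)) * ((f xp - f xi) / (xp - xi)) > 0 →
      |fritschButland ((f xi - f xm) / (xi - xm)) ((f xp - f xi) / (xp - xi))
          - deriv f xi|
        ≤ 3 / 2 * M * max (xi - xm) (xp - xi)) := by
  refine ⟨fritschButland_mul_nonneg_and_abs_le, ?_⟩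
  intro xm xi xp M f hxm hxp hf hM hprod
  have hM0 : 0 ≤ M := (abs_nonneg _).trans (hM xi ⟨hxm.le, hxp.le⟩)
  have hh : 0 ≤ max (xi - xm) (xp - xi) := (sub_nonneg.2 hxm.le).trans (le_max_left _ _)
  rw [← derivWithin_of_mem_nhds (Icc_mem_nhds hxm hxp)]
  calc _ ≤ M * max (xi - xm) (xp - xi) := by
        refine abs_sub_le_of_mem_uIcc (fritschButland_mem_uIcc hprod) ?_ ?_
        · calc _ ≤ M * (xi - xm) := abs_slope_sub_derivWithin_le (hxm.trans hxp) hf hM le_rfl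
                hxm hxp.le (right_mem_Icc.2 hxm.le)
            _ ≤ _ := by gcongr; exact le_max_left _ _
        · calc _ ≤ M * (xp - xi) := abs_slope_sub_derivWithin_le (hxm.trans hxp) hf hM hxm.le
                hxp le_rfl (left_mem_Icc.2 hxp.le)
            _ ≤ _ := by gcongr; exact le_max_right _ _
    _ ≤ 3 / 2 * M * max (xi - xm) (xp - xi) := by nlinarith [mul_nonneg hM0 hh]
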